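/- Every pseudo-descending sequence of Cantor normal forms is eventually zero (Theorem 5.3): for every f : ℕ → {t : Tree // isCNF t}, if for every i either f (i+1) < f i, or f i = 0 and f (i+1) = 0, then there exists n such that f i = 0 for all i ≥ n. -/

import Mathlib

namespace CNFOrd

/-- Binary trees: `omega a b` represents the ordinal `ω^a + b`. -/
inductive T : Type
  | zero : T
  | omega : T → T → T
  deriving DecidableEq

namespace T

/-- The strict order on trees. -/
inductive Lt : T → T → Prop
  | lt1 {a b : T} : Lt zero (omega a b)
  | lt2 {a b c d : T} : Lt a c → Lt (omega a b) (omega c d)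
  | lt3 {a b c d : T} : a = c → Lt b d → Lt (omega a b) (omega c d)

/-- `a ≥ b` means `b < a` or `a = b`. -/
def Ge (a b : T) : Prop := Lt b a ∨ a = b

/-- First exponent of a tree. -/
def fst : T → T
  | zero => zero
  | omega a _ => a

/-- The predicate of being in Cantor normal form. -/
inductive isCNF : T → Prop
  | zero : isCNF zero
  | omega {a b : T} : isCNF a → isCNF b → Ge a (fst b) → isCNF (omega a b)

/-- Decidability of the strict order. -/
def decLt : (a b : T) → Decidable (Lt a b)
  | _, zero => isFalse fun h => nomatch h
  | zero, omega _ _ => isTrue .lt1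
  | omega a b, omega c d =>
    match decLt a c with
    | isTrue h => isTrue (.lt2 h)
    | isFalse h1 =>
      if he : a = c then
        match decLt b d with
        | isTrue h2 => isTrue (.lt3 he h2)
        | isFalse h2 => isFalse fun h => by
            cases h with
            | lt2 h' => exact h1 h'
            | lt3 _ h2' => exact h2 h2'
      else isFalse fun h => by
            cases h with
            | lt2 h' => exact h1 h'
            | lt3 he' _ => exact he he'

instance : ∀ a b : T, Decidable (Lt a b) := decLt

/-- List insertion. -/
def insert (a : T) : T → T
  | zero => omega a zero
  | omega b c => if Lt a b then omega b (insert a c) else omega a (omega b c)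

/-- The permutation congruence: smallest equivalence relation which is a
congruence for `omega` and satisfies the swap rule. -/
inductive Perm : T → T → Prop
  | refl (a : T) : Perm a a
  | symm {a b : T} : Perm a b → Perm b a
  | trans {a b c : T} : Perm a b → Perm b c → Perm a c
  | congr {a a' b b' : T} : Perm a a' → Perm b b' → Perm (omega a b) (omega a' b')
  | swap (a b c : T) : Perm (omega a (omega b c)) (omega b (omega a c))

instance permSetoid : Setoid T := ⟨Perm, ⟨Perm.refl, Perm.symm, Perm.trans⟩⟩

/-- Hessenberg sum. -/
def oplus : T → T → T
  | zero, y => y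
  | omega a b, y => omega a (oplus b y)

/-- Ordinal addition. -/
def add : T → T → T
  | zero, b => b
  | a, zero => a
  | omega a c, omega b d => if Lt a b then omega b d else omega a (add c (omega b d))

/-- Ordinal multiplication. -/
def mul : T → T → T
  | zero, _ => zero
  | _, zero => zero
  | a, omega zero d => add a (mul a d)
  | omega a c, omega b d => omega (add a b) (mul (omega a c) d)

end T

end CNFOrd

/-!
Evaluating a tree `ω^a + b` as the ordinal `ω^(eval a) + eval b` is strictly monotone on Cantor
normal forms, since a normal form `ω^a + b` lies below `ω^(a+1)`. So `<` is well-founded on normal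
forms, and a pseudo-descending sequence cannot descend forever; once it reaches `0` it stays
there, as nothing lies below `0`.
-/

theorem WellFounded.exists_forall_ge_eq_of_pseudo_descending {α : Type*}
    {r : α → α → Prop} (hr : WellFounded r) {z : α} (hz : ∀ x, ¬ r x z) (f : ℕ → α)
    (hf : ∀ i, r (f (i + 1)) (f i) ∨ f i = z ∧ f (i + 1) = z) :
    ∃ n, ∀ i, n ≤ i → f i = z := by
  have : IsWellFounded α r := ⟨hr⟩
  obtain ⟨n, hn⟩ := WellFounded.not_rel_apply_succ (r := r) f
  refine ⟨n, fun i hi => ?_⟩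
  induction i, hi using Nat.le_induction with
  | base => exact ((hf n).resolve_left hn).1
  | succ j _ hj => exact ((hf j).resolve_left (hj ▸ hz _)).2

namespace CNFOrd.T

open Ordinal

noncomputable def toOrdinal : T → Ordinal.{0}
  | zero => 0
  | omega a b => ω ^ toOrdinal a + toOrdinal b

theorem not_lt_zero (x : T) : ¬ Lt x zero := nofun

/- The two facts are proved together: comparing `ω^a + b < ω^c + d` for `a < c` needs the
bound `b < ω^(fst b + 1)`, whose proof compares `fst b` with `a`. -/
mutual

theorem toOrdinal_lt_opow_fst_add_one : ∀ {t : T}, isCNF t →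
    toOrdinal t < ω ^ (toOrdinal (fst t) + 1)
  | _, .zero => opow_pos _ omega0_pos
  | omega a b, .omega ha hb hab => by
    have hfst : toOrdinal (fst b) ≤ toOrdinal a := by
      rcases hab with hlt | rfl
      · cases hb with
        | zero => exact zero_le
        | omega hc _ _ => exact (toOrdinal_lt_toOrdinal hc ha hlt).le
      · rfl
    refine isPrincipal_add_omega0_opow _
      ((opow_lt_opow_iff_right one_lt_omega0).2 (lt_add_one _)) ?_
    exact (toOrdinal_lt_opow_fst_add_one hb).trans_le
      (opow_le_opow_right omega0_pos (add_le_add_left hfst 1))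

theorem toOrdinal_lt_toOrdinal : ∀ {a b : T}, isCNF a → isCNF b → Lt a b →
    toOrdinal a < toOrdinal b
  | _, omega c d, _, _, .lt1 => (opow_pos _ omega0_pos).trans_le le_self_add
  | omega a b, omega c d, hab@(.omega ha _ _), .omega hc _ _, .lt2 hac => calc
    toOrdinal (omega a b) < ω ^ (toOrdinal a + 1) := toOrdinal_lt_opow_fst_add_one hab
    _ ≤ ω ^ toOrdinal c := opow_le_opow_right omega0_pos
      (Order.add_one_le_of_lt (toOrdinal_lt_toOrdinal ha hc hac))
    _ ≤ toOrdinal (omega c d) := le_self_add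
  | omega a b, omega _ d, .omega _ hb _, .omega _ hd _, .lt3 rfl hbd =>
    (add_lt_add_iff_left _).2 (toOrdinal_lt_toOrdinal hb hd hbd)

end

theorem wellFounded_lt_of_isCNF :
    WellFounded fun a b : {t : T // isCNF t} => Lt a.val b.val :=
  Subrelation.wf (fun {a b} h => toOrdinal_lt_toOrdinal a.prop b.prop h)
    (InvImage.wf (fun a : {t : T // isCNF t} => toOrdinal a.val) Ordinal.lt_wf)

end CNFOrd.T

open CNFOrd T in
/-- every pseudo-descending sequence of Cantor normal forms is
eventually zero. -/
theorem pseudo_descending_eventually_zero :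
    ∀ f : ℕ → {t : T // isCNF t},
      (∀ i, Lt (f (i + 1)).val (f i).val ∨
        ((f i).val = T.zero ∧ (f (i + 1)).val = T.zero)) →
      ∃ n, ∀ i, n ≤ i → (f i).val = T.zero := by
  intro f hf
  obtain ⟨n, hn⟩ := wellFounded_lt_of_isCNF.exists_forall_ge_eq_of_pseudo_descending
    (z := ⟨zero, isCNF.zero⟩) (fun x => not_lt_zero x.val) f
    (by simpa only [Subtype.ext_iff] using hf)
  exact ⟨n, fun i hi => congrArg Subtype.val (hn i hi)⟩
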